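/- Let G be a polynomial over a field K of degree m with G = G₀ − X^k·G₁, where deg(G₀) < k and G(0) ≠ 0. Then for all t ≥ 1, the truncated power series G₀^t / G mod X^{tk} has at most (#G + t − 2)^{t−1}/(t−1)! nonzero monomials. -/

import Mathlib

/-!
Since `G = G₀ - X^k G₁` is invertible in `K⟦X⟧`, the geometric identity
`G₀^t / G = ∑_{i<t} G₀^i (X^k G₁)^(t-1-i) + (X^k G₁)^t / G` shows that below degree `tk` the
series `G₀^t / G` agrees with a polynomial whose exponents are sums of `t - 1` exponents of
`G₀` or of `X^k G₁`. As `deg G₀ < k`, these are exponents of `G`, so the support lies in the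
`(t-1)`-fold sumset of `supp G`, which has at most `(#G + t - 2).choose (t - 1)` elements
(one per multiset of size `t - 1` drawn from `supp G`).
-/

open Polynomial Finset
open scoped Pointwise PowerSeries

namespace Polynomial

variable {R : Type*}

section Semiring

variable [Semiring R]

lemma support_mul_subset_add (p q : R[X]) : (p * q).support ⊆ p.support + q.support := by
  intro n hn
  rw [mem_support_iff, coeff_mul] at hn
  obtain ⟨⟨a, b⟩, hab, hne⟩ := exists_ne_zero_of_sum_ne_zero hn
  exact mem_add.2 ⟨a, mem_support_iff.2 (left_ne_zero_of_mul hne), b,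
    mem_support_iff.2 (right_ne_zero_of_mul hne), mem_antidiagonal.1 hab⟩

lemma support_pow_subset_nsmul (p : R[X]) (n : ℕ) : (p ^ n).support ⊆ n • p.support := by
  induction n with
  | zero => rw [pow_zero, zero_nsmul, ← C_1]; exact support_C_subset 1
  | succ n ih =>
    rw [pow_succ, succ_nsmul]
    exact (support_mul_subset_add _ _).trans (add_subset_add ih subset_rfl)

end Semiring

lemma support_geom_sum₂_subset [CommSemiring R] (p q : R[X]) (n : ℕ) :
    (∑ i ∈ range n, p ^ i * q ^ (n - 1 - i)).support ⊆ (n - 1) • (p.support ∪ q.support) := by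
  refine sum_induction _ (fun r : R[X] ↦ r.support ⊆ (n - 1) • (p.support ∪ q.support))
    (fun r s hr hs ↦ support_add.trans (union_subset hr hs)) (by simp) fun i hi ↦ ?_
  have hi : i + (n - 1 - i) = n - 1 := by have := mem_range.1 hi; omega
  calc (p ^ i * q ^ (n - 1 - i)).support
      ⊆ i • p.support + (n - 1 - i) • q.support :=
        (support_mul_subset_add _ _).trans
          (add_subset_add (support_pow_subset_nsmul _ _) (support_pow_subset_nsmul _ _))
    _ ⊆ i • (p.support ∪ q.support) + (n - 1 - i) • (p.support ∪ q.support) :=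
        add_subset_add (nsmul_subset_nsmul_left subset_union_left)
          (nsmul_subset_nsmul_left subset_union_right)
    _ = (n - 1) • (p.support ∪ q.support) := by rw [← add_nsmul, hi]

lemma support_union_subset_support_sub_X_pow_mul [Ring R] {p : R[X]} (q : R[X]) {k : ℕ}
    (hp : p.natDegree < k) : p.support ∪ (X ^ k * q).support ⊆ (p - X ^ k * q).support := by
  intro n hn
  simp only [mem_union, mem_support_iff, coeff_sub, coeff_X_pow_mul'] at hn ⊢
  by_cases hkn : k ≤ n
  · simpa [hkn, coeff_eq_zero_of_natDegree_lt (hp.trans_le hkn)] using hn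
  · simpa [hkn] using hn

end Polynomial

lemma Finset.card_nsmul_le_choose {α : Type*} [AddCommMonoid α] [DecidableEq α]
    (s : Finset α) (n : ℕ) : #(n • s) ≤ (#s + n - 1).choose n := by
  classical
  have hsub : n • s ⊆ univ.image fun v : Sym s n ↦ (v.1.map Subtype.val).sum := by
    induction n with
    | zero =>
      intro x hx
      rw [zero_nsmul, mem_zero] at hx
      exact mem_image.2 ⟨Sym.nil, mem_univ _, by simp [hx]⟩
    | succ n ih =>
      intro x hx
      obtain ⟨y, hy, z, hz, rfl⟩ := mem_add.1 (succ_nsmul s n ▸ hx)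
      obtain ⟨v, -, rfl⟩ := mem_image.1 (ih hy)
      exact mem_image.2 ⟨Sym.cons ⟨z, hz⟩ v, mem_univ _, by simp [Sym.coe_cons, add_comm]⟩
  calc #(n • s) ≤ Fintype.card (Sym s n) := (card_le_card hsub).trans card_image_le
    _ = (#s + n - 1).choose n := by rw [Sym.card_sym_eq_choose, Fintype.card_coe]

lemma pow_mul_eq_geom_sum₂_add {R : Type*} [CommRing R] {x y u : R} (hu : (x - y) * u = 1)
    (n : ℕ) : x ^ n * u = ∑ i ∈ range n, x ^ i * y ^ (n - 1 - i) + y ^ n * u := by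
  linear_combination (-u) * geom_sum₂_mul x y n + (∑ i ∈ range n, x ^ i * y ^ (n - 1 - i)) * hu

lemma PowerSeries.support_trunc_coe_add_X_pow_mul_subset {R : Type*} [Semiring R] (p : R[X])
    (f : R⟦X⟧) (n : ℕ) : (trunc n ((p : R⟦X⟧) + X ^ n * f)).support ⊆ p.support := by
  intro i hi
  rw [mem_support_iff, coeff_trunc] at hi
  split_ifs at hi with hin
  · simpa [coeff_X_pow_mul', hin.not_ge] using hi
  · exact absurd rfl hi

theorem stmt8_general {K : Type*} [Field K] (G G₀ G₁ : K[X]) (k t : ℕ)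
    (hG : G = G₀ - X ^ k * G₁) (hG0 : G₀.natDegree < k)
    (h0 : G.eval 0 ≠ 0) :
    ((PowerSeries.trunc (t * k)
        ((G₀ : PowerSeries K) ^ t * (G : PowerSeries K)⁻¹)).support.card : ℝ) ≤
      ((G.support.card + t - 2 : ℕ) : ℝ) ^ (t - 1) / (Nat.factorial (t - 1)) := by
  set P := ∑ i ∈ range t, G₀ ^ i * (X ^ k * G₁) ^ (t - 1 - i)
  have hquot : (G₀ : K⟦X⟧) ^ t * (G : K⟦X⟧)⁻¹ =
      (P : K⟦X⟧) + PowerSeries.X ^ (t * k) * ((G₁ : K⟦X⟧) ^ t * (G : K⟦X⟧)⁻¹) := by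
    have hinv : ((G₀ : K⟦X⟧) - (X ^ k * G₁ : K[X])) * (G : K⟦X⟧)⁻¹ = 1 := by
      rw [← Polynomial.coe_sub, ← hG]
      exact PowerSeries.mul_inv_cancel _ (by rwa [constantCoeff_coe, coeff_zero_eq_eval_zero])
    rw [pow_mul_eq_geom_sum₂_add hinv, ← coeToPowerSeries.ringHom_apply (φ := P)]
    simp only [P, map_sum, map_mul, map_pow, coeToPowerSeries.ringHom_apply]
    push_cast
    ring
  have hsupp : P.support ⊆ (t - 1) • G.support :=
    (support_geom_sum₂_subset _ _ _).trans
      (nsmul_subset_nsmul_left (hG ▸ support_union_subset_support_sub_X_pow_mul G₁ hG0))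
  have hcard : #(PowerSeries.trunc (t * k) ((G₀ : K⟦X⟧) ^ t * (G : K⟦X⟧)⁻¹)).support ≤
      (#G.support + (t - 1) - 1).choose (t - 1) :=
    hquot ▸ (card_le_card
      ((PowerSeries.support_trunc_coe_add_X_pow_mul_subset _ _ _).trans hsupp)).trans
      (card_nsmul_le_choose _ _)
  -- for `t = 0` the two upper indices differ, but both coefficients are `1`
  have hindex :
      (#G.support + (t - 1) - 1).choose (t - 1) = (#G.support + t - 2).choose (t - 1) := by
    rcases t with _ | t
    · simp
    · rw [show #G.support + (t + 1) - 2 = #G.support + (t + 1 - 1) - 1 by omega]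
  exact (Nat.cast_le.2 (hcard.trans_eq hindex)).trans (Nat.choose_le_pow_div _ _)

theorem stmt8 {K : Type*} [Field K] (G G₀ G₁ : K[X]) (m k t : ℕ) (ht : 1 ≤ t)
    (hGdeg : G.natDegree = m) (hG : G = G₀ - X ^ k * G₁) (hG0 : G₀.natDegree < k)
    (h0 : G.eval 0 ≠ 0) :
    ((PowerSeries.trunc (t * k)
        ((G₀ : PowerSeries K) ^ t * (G : PowerSeries K)⁻¹)).support.card : ℝ) ≤
      ((G.support.card + t - 2 : ℕ) : ℝ) ^ (t - 1) / (Nat.factorial (t - 1)) :=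
  stmt8_general G G₀ G₁ k t hG hG0 h0
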